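/- Let T be a finite tree with at least one edge, let w : E(T) → ℕ be an edge-weight function, and let G = BF(T,w). Then the edge ideal I(G) is bridge-friendly; i.e., there exists a total order on mingens(I(G)) with respect to which every potentially-type-2 subset is type-2. -/

import Mathlib

open scoped Classical

noncomputable section

namespace ChauHaMaithani

variable {V : Type*}

/-- The lcm of a finite set of monomials (exponent vectors): pointwise maximum. -/
def mlcm (σ : Finset (V → ℕ)) : V → ℕ := fun v => σ.sup fun g => g v

/-- `m` is a bridge of `σ`: `m ∈ σ` and dropping `m` does not change the lcm. -/
def IsBridge (σ : Finset (V → ℕ)) (m : V → ℕ) : Prop :=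
  m ∈ σ ∧ mlcm (σ.erase m) = mlcm σ

/-- `m` is a gap of `σ`: `m ∉ σ` and adding `m` does not change the lcm. -/
def IsGap (σ : Finset (V → ℕ)) (m : V → ℕ) : Prop :=
  m ∉ σ ∧ mlcm (insert m σ) = mlcm σ

/-- A total order `≻` on monomials is encoded by a ranking function `ord`:
`m ≻ m'` iff `ord m' < ord m` (injectivity on the generating set is assumed separately).
`m` is a true gap of `σ` if it is a gap and every bridge of `σ ∪ {m}` dominated by `m`
is already a bridge of `σ`. -/
def IsTrueGap (ord : (V → ℕ) → ℕ) (σ : Finset (V → ℕ)) (m : V → ℕ) : Prop :=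
  IsGap σ m ∧ ∀ m', IsBridge (insert m σ) m' → ord m' < ord m → IsBridge σ m'

/-- `σ` is type-1: it has a true gap (in `M`) dominating none of its bridges. -/
def Type1 (M : Finset (V → ℕ)) (ord : (V → ℕ) → ℕ) (σ : Finset (V → ℕ)) : Prop :=
  ∃ m ∈ M, IsTrueGap ord σ m ∧ ∀ b, IsBridge σ b → ¬ ord b < ord m

/-- `σ` is potentially-type-2: it has a bridge dominating none of its true gaps. -/
def PotType2 (M : Finset (V → ℕ)) (ord : (V → ℕ) → ℕ) (σ : Finset (V → ℕ)) : Prop :=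
  ∃ b, IsBridge σ b ∧ ∀ m ∈ M, IsTrueGap ord σ m → ¬ ord m < ord b

/-- `b` is the `≻`-smallest bridge of `σ`. -/
def IsSBridge (ord : (V → ℕ) → ℕ) (σ : Finset (V → ℕ)) (b : V → ℕ) : Prop :=
  IsBridge σ b ∧ ∀ b', IsBridge σ b' → ord b ≤ ord b'

/-- `σ` is type-2. -/
def Type2 (M : Finset (V → ℕ)) (ord : (V → ℕ) → ℕ) (σ : Finset (V → ℕ)) : Prop :=
  PotType2 M ord σ ∧
    ∀ σ' : Finset (V → ℕ), σ' ⊆ M → σ' ≠ σ → PotType2 M ord σ' →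
      ∀ b b', IsSBridge ord σ b → IsSBridge ord σ' b' →
        σ'.erase b' = σ.erase b → ord b < ord b'

/-- `M` (the minimal generating set of a monomial ideal) is bridge-friendly w.r.t. `ord`:
every potentially-type-2 subset is type-2. -/
def BridgeFriendlyWrt (M : Finset (V → ℕ)) (ord : (V → ℕ) → ℕ) : Prop :=
  ∀ σ ⊆ M, PotType2 M ord σ → Type2 M ord σ

/-- `M` is bridge-friendly: bridge-friendly w.r.t. some total order on `M`. -/
def BridgeFriendly (M : Finset (V → ℕ)) : Prop :=
  ∃ ord : (V → ℕ) → ℕ, Set.InjOn ord M ∧ BridgeFriendlyWrt M ord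

/-- `σ = {m_1 ≻ ⋯ ≻ m_k} ⊆ M` is Lyubeznik-critical w.r.t. `ord`: there is no `m ∈ M` with
`m_t ≻ m` and `m ∣ lcm(m_1, …, m_t)` for some `1 < t ≤ k`. -/
def LyubCritical (M : Finset (V → ℕ)) (ord : (V → ℕ) → ℕ) (σ : Finset (V → ℕ)) : Prop :=
  σ ⊆ M ∧ ¬ ∃ m ∈ M, ∃ t ∈ σ, (∃ u ∈ σ, ord t < ord u) ∧ ord m < ord t ∧
      ∀ v, m v ≤ mlcm (σ.filter fun g => ord t ≤ ord g) v

/-- `M` is Lyubeznik: for some total order on `M`, no Lyubeznik-critical subset has a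
bridge (equivalently, the associated Lyubeznik resolution is minimal). -/
def IsLyubeznik (M : Finset (V → ℕ)) : Prop :=
  ∃ ord : (V → ℕ) → ℕ, Set.InjOn ord M ∧
    ∀ σ : Finset (V → ℕ), LyubCritical M ord σ → ∀ b, ¬ IsBridge σ b

/-- The quadratic monomial `xy` attached to an edge `e = {x,y}`. -/
def edgeMon (e : Sym2 V) : V → ℕ := fun v => if v ∈ e then 1 else 0

/-- `mingens(I(G))`: the edge monomials of `G`. -/
def edgeGens [Fintype V] (G : SimpleGraph V) : Finset (V → ℕ) :=
  (Finset.univ.filter fun e : Sym2 V => e ∈ G.edgeSet).image edgeMon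

/-- `mingens(I(G)^n)`: the monomials that are products of `n` edges of `G`. -/
def edgePowGens [Fintype V] (G : SimpleGraph V) (n : ℕ) : Finset (V → ℕ) :=
  (Finset.univ.filter fun f : Fin n → Sym2 V => ∀ i, f i ∈ G.edgeSet).image
    fun f => ∑ i, edgeMon (f i)

/-- A graph is chordal if it contains no induced cycle of length at least 4. -/
def Chordal (G : SimpleGraph V) : Prop :=
  ∀ n, 4 ≤ n → IsEmpty (SimpleGraph.cycleGraph n ↪g G)


/-- Vertex type of the graph `L(a,b,c)`: `Sum.inl 0` is `x`, `Sum.inl 1` is `y`,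
and the remaining summands are the leaves `x_i`, the leaves `y_j`, and the
triangle tips `z_k`. -/
abbrev LV (a b c : ℕ) := Fin 2 ⊕ (Fin a ⊕ Fin b ⊕ Fin c)

/-- The graph `L(a,b,c)`: `c` triangles glued along the common edge `{x,y}`, with
`a` leaves attached to `x` and `b` leaves attached to `y`. -/
def LGraph (a b c : ℕ) : SimpleGraph (LV a b c) :=
  SimpleGraph.fromRel fun u v =>
    (u = Sum.inl 0 ∧ v = Sum.inl 1) ∨
    (∃ i, u = Sum.inl 0 ∧ v = Sum.inr (Sum.inl i)) ∨
    (∃ j, u = Sum.inl 1 ∧ v = Sum.inr (Sum.inr (Sum.inl j))) ∨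
    (∃ k, (u = Sum.inl 0 ∨ u = Sum.inl 1) ∧ v = Sum.inr (Sum.inr (Sum.inr k)))

/-- The graph `BF(T,w)`: attach `w(e)` new triangles along each edge `e` of `T`. -/
def BFGraph {VT : Type} (T : SimpleGraph VT) (w : T.edgeSet → ℕ) :
    SimpleGraph (VT ⊕ (Σ e : T.edgeSet, Fin (w e))) :=
  SimpleGraph.fromRel fun u v =>
    (∃ a b, u = Sum.inl a ∧ v = Sum.inl b ∧ T.Adj a b) ∨
    (∃ (a : VT) (e : T.edgeSet) (i : Fin (w e)), u = Sum.inl a ∧ v = Sum.inr ⟨e, i⟩ ∧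
      a ∈ (e : Sym2 VT))

/-- The kite graph: the diamond (`K₄` minus the edge `{2,3}`) together with a pendant
vertex `4` attached to the degree-two vertex `2`. -/
def kite : SimpleGraph (Fin 5) :=
  SimpleGraph.fromEdgeSet {s(0,1), s(0,2), s(0,3), s(1,2), s(1,3), s(2,4)}

/-- The gem graph: the path `0-1-2-3` together with a vertex `4` adjacent to all of
`0,1,2,3`. -/
def gem : SimpleGraph (Fin 5) :=
  SimpleGraph.fromEdgeSet {s(0,1), s(1,2), s(2,3), s(0,4), s(1,4), s(2,4), s(3,4)}

/-- The tadpole graph: the triangle `0,1,2` with a path `0-3-4` of length 2 attached. -/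
def tadpole : SimpleGraph (Fin 5) :=
  SimpleGraph.fromEdgeSet {s(0,1), s(1,2), s(0,2), s(0,3), s(3,4)}

/-- The butterfly graph: two triangles `0,1,2` and `0,3,4` sharing the vertex `0`. -/
def butterfly : SimpleGraph (Fin 5) :=
  SimpleGraph.fromEdgeSet {s(0,1), s(1,2), s(0,2), s(0,3), s(3,4), s(0,4)}

/-- The net graph: the triangle `0,1,2` with pendant vertices `3,4,5` attached to
`0,1,2` respectively. -/
def net : SimpleGraph (Fin 6) :=
  SimpleGraph.fromEdgeSet {s(0,1), s(1,2), s(0,2), s(0,3), s(1,4), s(2,5)}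

/-!
Order the edges of `BF(T,w)` by putting the edges of `T` first, deeper ones (from a root `r`)
smaller, and the edges through the new vertices last. Suppose a potentially-type-2 set `σ` with
smallest bridge `b`, and a set `σ'` with smallest bridge `b' ≺ b`, have `σ' ∖ b' = σ ∖ b`. Then
`b'` is a gap of `σ` that is not a true gap, which produces an edge `e = pq` of `σ` with `p ∈ b'`,
`q ∈ b`, such that no other member of `σ` contains `p` and `b` is the only other one containing
`q`. The path
`s – p – q – t` formed by `b'`, `e`, `b` either lies in `T`, where one of its outer edges is deeper
than `e`, contradicting `e ≺ b' ≺ b`; or it passes through a new vertex, and then the base edge of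
that triangle is a gap of `σ` below `b` that is again not a true gap, which the uniqueness of the
members through `p` and `q` rules out.
-/

end ChauHaMaithani

lemma Finset.exists_injOn_lt_of_lt {ι α : Type*} [LinearOrder α] (M : Finset ι) (κ : ι → α) :
    ∃ ord : ι → ℕ, Set.InjOn ord M ∧ ∀ m ∈ M, ∀ m', κ m < κ m' → ord m < ord m' := by
  set rank : ι → ℕ := fun m => (M.filter fun x => κ x < κ m).card
  set idx : ι → ℕ := M.toList.idxOf
  have hidx : ∀ m, idx m < M.card + 1 := fun m =>
    Nat.lt_succ_of_le (M.length_toList ▸ List.idxOf_le_length)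
  refine ⟨fun m => rank m * (M.card + 1) + idx m, fun m hm m' hm' h => ?_, fun m hm m' h => ?_⟩
  · have := congrArg (· % (M.card + 1)) h
    simp only [Nat.mul_add_mod_of_lt (hidx _)] at this
    exact (List.idxOf_inj (Finset.mem_toList.2 hm)).1 this
  · have hrank : rank m < rank m' := Finset.card_lt_card <|
      Finset.ssubset_iff_of_subset (Finset.monotone_filter_right _ fun x _ hx => hx.trans h)
        |>.2 ⟨m, by simp [hm, h]⟩
    calc rank m * (M.card + 1) + idx m < (rank m + 1) * (M.card + 1) := by
          rw [add_one_mul]; exact Nat.add_lt_add_left (hidx m) _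
      _ ≤ rank m' * (M.card + 1) := Nat.mul_le_mul_right _ hrank
      _ ≤ _ := Nat.le_add_right _ _

namespace SimpleGraph.IsTree

variable {W : Type*} {T : SimpleGraph W}

lemma eq_of_adj_of_dist_eq_add_one (hT : T.IsTree) (r : W) {a b c : W} (hac : T.Adj a c)
    (hbc : T.Adj b c) (ha : T.dist r c = T.dist r a + 1) (hb : T.dist r c = T.dist r b + 1) :
    a = b := by
  obtain ⟨P, hP, -⟩ := hT.connected.exists_path_of_dist r c
  have mem_of_parent : ∀ x, T.Adj x c → T.dist r c = T.dist r x + 1 → x ∈ P.support := by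
    intro x hxc hx
    obtain ⟨Q, hQ, hQlen⟩ := hT.connected.exists_path_of_dist r x
    refine hT.isAcyclic.mem_support_of_ne_mem_support_of_adj_of_isPath hP hQ hxc.symm
      fun hc => ?_
    have := (SimpleGraph.dist_le (Q.takeUntil c hc)).trans (Q.length_takeUntil_le_length hc)
    omega
  rw [hT.isAcyclic.eq_penultimate_of_adj_end hP hac.symm (mem_of_parent a hac ha),
    hT.isAcyclic.eq_penultimate_of_adj_end hP hbc.symm (mem_of_parent b hbc hb)]

lemma dist_eq_add_one_of_adj_of_ne (hT : T.IsTree) (r : W) {a b c : W} (hab : T.Adj a b)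
    (hbc : T.Adj b c) (hac : a ≠ c) (hb : T.dist r b = T.dist r a + 1) :
    T.dist r c = T.dist r b + 1 :=
  (hT.dist_eq_dist_add_one_of_adj r hbc).resolve_left fun hc =>
    hac (hT.eq_of_adj_of_dist_eq_add_one r hab hbc.symm hb hc)

end SimpleGraph.IsTree

namespace ChauHaMaithani

variable {V : Type*}

section Monomials

lemma mlcm_insert (m : V → ℕ) (σ : Finset (V → ℕ)) (v : V) :
    mlcm (insert m σ) v = max (m v) (mlcm σ v) := by
  simp [mlcm, Finset.sup_insert]

lemma le_mlcm {σ : Finset (V → ℕ)} {m : V → ℕ} (hm : m ∈ σ) (v : V) : m v ≤ mlcm σ v :=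
  Finset.le_sup (f := fun g => g v) hm

lemma mlcm_eq_zero_iff {σ : Finset (V → ℕ)} {v : V} : mlcm σ v = 0 ↔ ∀ g ∈ σ, g v = 0 := by
  simp [mlcm]

lemma isBridge_iff_forall_le {σ : Finset (V → ℕ)} {m : V → ℕ} (hm : m ∈ σ) :
    IsBridge σ m ↔ ∀ v, m v ≤ mlcm (σ.erase m) v := by
  refine ⟨fun h v => (congrFun h.2 v).symm ▸ le_mlcm hm v, fun h => ⟨hm, funext fun v => ?_⟩⟩
  conv_rhs => rw [← Finset.insert_erase hm]
  rw [mlcm_insert, max_eq_right (h v)]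

lemma isGap_iff_forall_le {σ : Finset (V → ℕ)} {m : V → ℕ} (hm : m ∉ σ) :
    IsGap σ m ↔ ∀ v, m v ≤ mlcm σ v := by
  refine ⟨fun h v => ?_, fun h => ⟨hm, funext fun v => by rw [mlcm_insert, max_eq_right (h v)]⟩⟩
  rw [← h.2]
  exact le_mlcm (Finset.mem_insert_self m σ) v

lemma IsBridge.exists_ne_of_ne_zero {σ : Finset (V → ℕ)} {m : V → ℕ} (h : IsBridge σ m)
    {v : V} (hv : m v ≠ 0) : ∃ g ∈ σ, g ≠ m ∧ g v ≠ 0 := by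
  have := (isBridge_iff_forall_le h.1).1 h v
  contrapose! this
  simpa [mlcm_eq_zero_iff.2 fun g hg => this g (Finset.mem_of_mem_erase hg)
    (Finset.ne_of_mem_erase hg)] using Nat.pos_of_ne_zero hv

lemma exists_lt_of_isBridge_insert {σ : Finset (V → ℕ)} {g m : V → ℕ} (hg : g ∉ σ)
    (hm : m ∈ σ) (hbr : IsBridge (insert g σ) m) (hnbr : ¬ IsBridge σ m) :
    ∃ v, mlcm (σ.erase m) v < m v ∧ m v ≤ g v := by
  obtain ⟨v, hv⟩ : ∃ v, mlcm (σ.erase m) v < m v := by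
    simpa [isBridge_iff_forall_le hm] using hnbr
  have := (isBridge_iff_forall_le (Finset.mem_insert_of_mem hm)).1 hbr v
  rw [Finset.erase_insert_of_ne (ne_of_mem_of_not_mem hm hg).symm, mlcm_insert] at this
  exact ⟨v, hv, by omega⟩

lemma eq_of_mlcm_erase_lt {σ : Finset (V → ℕ)} {m h : V → ℕ} {v : V} (hm : m v ≤ 1)
    (hlt : mlcm (σ.erase m) v < m v) (hh : h ∈ σ) (hv : h v ≠ 0) : h = m := by
  by_contra hne
  have := le_mlcm (Finset.mem_erase.2 ⟨hne, hh⟩) v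
  omega

end Monomials

section TrueGaps

variable {M σ : Finset (V → ℕ)} {ord : (V → ℕ) → ℕ} {b g : V → ℕ}

lemma PotType2.exists_isBridge_insert_of_isGap (hpot : PotType2 M ord σ) (hb : IsSBridge ord σ b)
    (hgM : g ∈ M) (hg : IsGap σ g) (hlt : ord g < ord b) :
    ∃ m ∈ σ, ord m < ord g ∧ IsBridge (insert g σ) m ∧ ¬ IsBridge σ m := by
  obtain ⟨c, hc, hcg⟩ := hpot
  have hntg : ¬ IsTrueGap ord σ g := fun htg => hcg g hgM htg (hlt.trans_le (hb.2 c hc))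
  simp only [IsTrueGap, hg, true_and, not_forall] at hntg
  obtain ⟨m, hbr, hm, hnbr⟩ := hntg
  refine ⟨m, ?_, hm, hbr, hnbr⟩
  rcases Finset.mem_insert.1 hbr.1 with rfl | h
  · exact absurd hm (lt_irrefl _)
  · exact h

lemma PotType2.exists_unique_cover_of_gap (hM : ∀ m ∈ M, ∀ v, m v ≤ 1) (hσM : σ ⊆ M)
    (hpot : PotType2 M ord σ) (hb : IsSBridge ord σ b) (hgM : g ∈ M) (hgσ : g ∉ σ)
    (hcov : ∀ v, g v ≠ 0 → ∃ h ∈ σ, h v ≠ 0) (hlt : ord g < ord b) :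
    ∃ m ∈ σ, ord m < ord g ∧ ∃ ρ, g ρ ≠ 0 ∧ m ρ ≠ 0 ∧ ∀ h ∈ σ, h ρ ≠ 0 → h = m := by
  have hgap : IsGap σ g := (isGap_iff_forall_le hgσ).2 fun v => by
    by_cases hv : g v = 0
    · omega
    obtain ⟨h, hh, hhv⟩ := hcov v hv
    have := le_mlcm hh v
    have := hM g hgM v
    omega
  obtain ⟨m, hm, hmg, hbr, hnbr⟩ := hpot.exists_isBridge_insert_of_isGap hb hgM hgap hlt
  obtain ⟨ρ, hρ, hρg⟩ := exists_lt_of_isBridge_insert hgσ hm hbr hnbr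
  exact ⟨m, hm, hmg, ρ, by omega, by omega, fun h hh hhρ =>
    eq_of_mlcm_erase_lt (hM m (hσM hm) ρ) hρ hh hhρ⟩

end TrueGaps

/-- What replacing the smallest bridge `b` of a potentially-type-2 set `σ` by a smaller bridge
`b'` of `σ ∖ {b} ∪ {b'}` forces, when all monomials are squarefree. -/
structure ExchangeWitness (σ : Finset (V → ℕ)) (b b' e : V → ℕ) (p q : V) : Prop where
  mem : e ∈ σ
  ne : e ≠ b
  e_p : e p ≠ 0
  b'_p : b' p ≠ 0
  unique_p : ∀ h ∈ σ, h p ≠ 0 → h = e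
  e_q : e q ≠ 0
  b_q : b q ≠ 0
  b'_q : b' q = 0
  unique_q : ∀ h ∈ σ, h q ≠ 0 → h = e ∨ h = b

section Exchange

variable {M σ σ' : Finset (V → ℕ)} {ord : (V → ℕ) → ℕ} {b b' : V → ℕ}

lemma exists_exchangeWitness (hM : ∀ m ∈ M, ∀ v, m v ≤ 1) (hσM : σ ⊆ M)
    (hpot : PotType2 M ord σ) (hb : IsSBridge ord σ b) (hb' : IsSBridge ord σ' b')
    (hb'M : b' ∈ M) (herase : σ'.erase b' = σ.erase b) (hlt : ord b' < ord b) :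
    ∃ e p q, ord e < ord b' ∧ ExchangeWitness σ b b' e p q := by
  have hbb' : b' ≠ b := ne_of_apply_ne ord hlt.ne
  have hτ : σ.erase b ⊆ σ' := herase ▸ Finset.erase_subset b' σ'
  have hb'σ : b' ∉ σ := fun h =>
    Finset.notMem_erase b' σ' (herase ▸ Finset.mem_erase.2 ⟨hbb', h⟩)
  have hbσ' : b ∉ σ' := fun h =>
    Finset.notMem_erase b σ (herase ▸ Finset.mem_erase.2 ⟨hbb'.symm, h⟩)
  have hgap : IsGap σ b' := (isGap_iff_forall_le hb'σ).2 fun v =>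
    calc b' v ≤ mlcm (σ'.erase b') v := (isBridge_iff_forall_le hb'.1.1).1 hb'.1 v
      _ = mlcm (σ.erase b) v := by rw [herase]
      _ ≤ mlcm σ v := Finset.sup_mono (Finset.erase_subset b σ)
  obtain ⟨e, he, heb', hbr, hnbr⟩ := hpot.exists_isBridge_insert_of_isGap hb hb'M hgap hlt
  obtain ⟨p, hp, hpb'⟩ := exists_lt_of_isBridge_insert hb'σ he hbr hnbr
  have heb : e ≠ b := by
    rintro rfl
    exact absurd ((isBridge_iff_forall_le he).1 hb.1 p) (not_le.2 hp)
  have he' : e ∈ σ' := hτ (Finset.mem_erase.2 ⟨heb, he⟩)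
  have hsame : insert b σ' = insert b' σ := by
    rw [← Finset.insert_erase hb'.1.1, herase, Finset.insert_comm, Finset.insert_erase hb.1.1]
  obtain ⟨q, hq, hqb⟩ := exists_lt_of_isBridge_insert hbσ' he' (hsame ▸ hbr)
    fun h => absurd (hb'.2 e h) (not_le.2 heb')
  have he1 := hM e (hσM he)
  have hq_unique : ∀ h ∈ σ', h q ≠ 0 → h = e := fun h hh hhq =>
    eq_of_mlcm_erase_lt (he1 q) hq hh hhq
  refine ⟨e, p, q, heb', he, heb, by omega, by omega,
    fun h hh hhp => eq_of_mlcm_erase_lt (he1 p) hp hh hhp, by omega, by omega, ?_, ?_⟩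
  · by_contra h
    exact hb'σ (hq_unique b' hb'.1.1 h ▸ he)
  · intro h hh hhq
    by_cases hhb : h = b
    · exact Or.inr hhb
    · exact Or.inl (hq_unique h (hτ (Finset.mem_erase.2 ⟨hhb, hh⟩)) hhq)

lemma bridgeFriendlyWrt_of_forall_not_exchangeWitness (hM : ∀ m ∈ M, ∀ v, m v ≤ 1)
    (hinj : Set.InjOn ord M)
    (h : ∀ σ ⊆ M, PotType2 M ord σ → ∀ b b' e p q, IsSBridge ord σ b → b' ∈ M →
      ord b' < ord b → ord e < ord b' → ¬ ExchangeWitness σ b b' e p q) :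
    BridgeFriendlyWrt M ord := by
  intro σ hσ hpot
  refine ⟨hpot, fun σ' hσ' hne _ b b' hb hb' herase => ?_⟩
  have hbb' : b ≠ b' := by
    rintro rfl
    exact hne (by rw [← Finset.insert_erase hb'.1.1, herase, Finset.insert_erase hb.1.1])
  refine (lt_or_gt_of_ne (hinj.ne (hσ hb.1.1) (hσ' hb'.1.1) hbb')).resolve_right fun hlt => ?_
  obtain ⟨e, p, q, hlte, hw⟩ :=
    exists_exchangeWitness hM hσ hpot hb hb' (hσ' hb'.1.1) herase hlt
  exact h σ hσ hpot b b' e p q hb (hσ' hb'.1.1) hlt hlte hw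

end Exchange

section EdgeMonomials

lemma edgeMon_ne_zero_iff {u v z : V} : edgeMon s(u, v) z ≠ 0 ↔ z = u ∨ z = v := by
  simp only [edgeMon, Sym2.mem_iff, ne_eq, ite_eq_right_iff, one_ne_zero, imp_false,
    not_not]

lemma edgeMon_le_one (e : Sym2 V) (z : V) : edgeMon e z ≤ 1 := by
  unfold edgeMon; split <;> omega

variable [Fintype V] {G : SimpleGraph V} {m : V → ℕ}

lemma mem_edgeGens_iff : m ∈ edgeGens G ↔ ∃ u v, G.Adj u v ∧ m = edgeMon s(u, v) := by
  simp only [edgeGens, Finset.mem_image, Finset.mem_filter, Finset.mem_univ, true_and]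
  constructor
  · rintro ⟨⟨u, v⟩, he, rfl⟩
    exact ⟨u, v, he, rfl⟩
  · rintro ⟨u, v, huv, rfl⟩
    exact ⟨s(u, v), huv, rfl⟩

lemma edgeMon_mem_edgeGens {u v : V} (h : G.Adj u v) : edgeMon s(u, v) ∈ edgeGens G :=
  mem_edgeGens_iff.2 ⟨u, v, h, rfl⟩

lemma le_one_of_mem_edgeGens (hm : m ∈ edgeGens G) (z : V) : m z ≤ 1 := by
  obtain ⟨u, v, -, rfl⟩ := mem_edgeGens_iff.1 hm
  exact edgeMon_le_one _ z

lemma exists_eq_edgeMon_of_ne_zero (hm : m ∈ edgeGens G) {x : V} (hx : m x ≠ 0) :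
    ∃ y, G.Adj x y ∧ m = edgeMon s(x, y) := by
  obtain ⟨u, v, huv, rfl⟩ := mem_edgeGens_iff.1 hm
  rcases edgeMon_ne_zero_iff.1 hx with rfl | rfl
  · exact ⟨v, huv, rfl⟩
  · exact ⟨u, huv.symm, by rw [Sym2.eq_swap]⟩

lemma eq_edgeMon_of_ne_zero (hm : m ∈ edgeGens G) {x y : V} (hx : m x ≠ 0) (hy : m y ≠ 0)
    (hxy : x ≠ y) : G.Adj x y ∧ m = edgeMon s(x, y) := by
  obtain ⟨z, hxz, rfl⟩ := exists_eq_edgeMon_of_ne_zero hm hx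
  obtain rfl : y = z := (edgeMon_ne_zero_iff.1 hy).resolve_left hxy.symm
  exact ⟨hxz, rfl⟩

end EdgeMonomials

section BFGraph

variable {VT : Type} {T : SimpleGraph VT} {w : T.edgeSet → ℕ}

@[simp]
lemma bfGraph_adj_inl_inl {a b : VT} : (BFGraph T w).Adj (.inl a) (.inl b) ↔ T.Adj a b := by
  simpa [BFGraph, T.adj_comm b a] using SimpleGraph.Adj.ne

@[simp]
lemma bfGraph_adj_inl_inr {a : VT} {x : Σ e : T.edgeSet, Fin (w e)} :
    (BFGraph T w).Adj (.inl a) (.inr x) ↔ a ∈ (x.1 : Sym2 VT) := by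
  obtain ⟨⟨e, he⟩, i⟩ := x
  simp [BFGraph, he]

lemma exists_eq_inl_of_bfGraph_adj_inr {u : VT ⊕ (Σ e : T.edgeSet, Fin (w e))}
    {x : Σ e : T.edgeSet, Fin (w e)} (h : (BFGraph T w).Adj u (.inr x)) :
    ∃ a, u = .inl a ∧ a ∈ (x.1 : Sym2 VT) := by
  rcases u with a | y
  · exact ⟨a, rfl, bfGraph_adj_inl_inr.1 h⟩
  · simp [BFGraph] at h

end BFGraph

section BFOrder

variable {VT : Type} [Fintype VT] (T : SimpleGraph VT) (w : T.edgeSet → ℕ) (r : VT)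

def bfKey (m : VT ⊕ (Σ e : T.edgeSet, Fin (w e)) → ℕ) : ℤ :=
  if ∃ x, m (.inr x) ≠ 0 then 1
  else -(({a | m (.inl a) ≠ 0} : Finset VT).sup (T.dist r) : ℕ)

def IsBFOrder (ord : (VT ⊕ (Σ e : T.edgeSet, Fin (w e)) → ℕ) → ℕ) : Prop :=
  ∀ m ∈ edgeGens (BFGraph T w), ∀ m', bfKey T w r m < bfKey T w r m' → ord m < ord m'

variable {T w r}

lemma bfKey_edgeMon_inl (a b : VT) :
    bfKey T w r (edgeMon s(.inl a, .inl b)) = -(max (T.dist r a) (T.dist r b) : ℕ) := by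
  have hsupp : ({c | edgeMon s(.inl a, .inl b) (.inl c : VT ⊕ (Σ e : T.edgeSet, Fin (w e))) ≠ 0}
      : Finset VT) = {a, b} := by
    ext c
    simp [edgeMon_ne_zero_iff]
  rw [bfKey, if_neg (by simp [edgeMon]), hsupp, Finset.sup_insert, Finset.sup_singleton]

lemma bfKey_of_ne_zero {m : VT ⊕ (Σ e : T.edgeSet, Fin (w e)) → ℕ}
    {x : Σ e : T.edgeSet, Fin (w e)} (h : m (.inr x) ≠ 0) : bfKey T w r m = 1 :=
  if_pos ⟨x, h⟩

variable {ord : (VT ⊕ (Σ e : T.edgeSet, Fin (w e)) → ℕ) → ℕ}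

lemma IsBFOrder.lt_of_ne_zero (hord : IsBFOrder T w r ord) {a b : VT} (hab : T.Adj a b)
    {m : VT ⊕ (Σ e : T.edgeSet, Fin (w e)) → ℕ} {x : Σ e : T.edgeSet, Fin (w e)}
    (hm : m (.inr x) ≠ 0) : ord (edgeMon s(.inl a, .inl b)) < ord m :=
  hord _ (edgeMon_mem_edgeGens (bfGraph_adj_inl_inl.2 hab)) m <| by
    rw [bfKey_edgeMon_inl, bfKey_of_ne_zero hm]
    omega

lemma IsBFOrder.max_dist_le (hord : IsBFOrder T w r ord) {a b c d : VT} (hcd : T.Adj c d)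
    (h : ord (edgeMon s(.inl a, .inl b)) < ord (edgeMon s(.inl c, .inl d))) :
    max (T.dist r c) (T.dist r d) ≤ max (T.dist r a) (T.dist r b) := by
  by_contra hlt
  refine (hord _ (edgeMon_mem_edgeGens (bfGraph_adj_inl_inl.2 hcd)) _ ?_).asymm h
  rw [bfKey_edgeMon_inl, bfKey_edgeMon_inl]
  omega

end BFOrder

section BFExchange

variable {VT : Type} [Fintype VT] {T : SimpleGraph VT} {w : T.edgeSet → ℕ} {r : VT}
  {ord : (VT ⊕ (Σ e : T.edgeSet, Fin (w e)) → ℕ) → ℕ}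
  {σ : Finset (VT ⊕ (Σ e : T.edgeSet, Fin (w e)) → ℕ)} {b' : VT ⊕ (Σ e : T.edgeSet, Fin (w e)) → ℕ}

lemma IsBFOrder.false_of_tree_path (hT : T.IsTree) (hord : IsBFOrder T w r ord) {s p q t : VT}
    (hps : T.Adj p s) (hpq : T.Adj p q) (hqt : T.Adj q t) (hsq : s ≠ q) (htp : t ≠ p)
    (hb' : ord (edgeMon s(.inl p, .inl q)) < ord (edgeMon s(.inl p, .inl s)))
    (hb : ord (edgeMon s(.inl p, .inl q)) < ord (edgeMon s(.inl q, .inl t))) : False := by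
  have hs := hord.max_dist_le hps hb'
  have ht := hord.max_dist_le hqt hb
  rcases hT.dist_eq_dist_add_one_of_adj r hpq with hd | hd
  · have := hT.dist_eq_add_one_of_adj_of_ne r hpq.symm hps hsq.symm hd
    omega
  · have := hT.dist_eq_add_one_of_adj_of_ne r hpq hqt htp.symm hd
    omega

lemma IsBFOrder.not_exchangeWitness_of_tip_end (hord : IsBFOrder T w r ord)
    (hσ : σ ⊆ edgeGens (BFGraph T w)) (hpot : PotType2 (edgeGens (BFGraph T w)) ord σ)
    {p : VT ⊕ (Σ e : T.edgeSet, Fin (w e))} {qa : VT} {tx : Σ e : T.edgeSet, Fin (w e)}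
    (hqt : (BFGraph T w).Adj (.inl qa) (.inr tx)) (htp : .inr tx ≠ p)
    (hb : IsSBridge ord σ (edgeMon s(.inl qa, .inr tx))) :
    ¬ ExchangeWitness σ (edgeMon s(.inl qa, .inr tx)) b' (edgeMon s(p, .inl qa)) p (.inl qa) := by
  intro hw
  obtain ⟨c, hc, hcb, hct⟩ := hb.1.exists_ne_of_ne_zero (v := .inr tx)
    (edgeMon_ne_zero_iff.2 (.inr rfl))
  obtain ⟨u, htu, rfl⟩ := exists_eq_edgeMon_of_ne_zero (hσ hc) hct
  obtain ⟨ya, rfl, hya⟩ := exists_eq_inl_of_bfGraph_adj_inr htu.symm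
  have hyq : ya ≠ qa := by
    rintro rfl
    exact hcb (Sym2.eq_swap ▸ rfl)
  have hyp : .inl ya ≠ p := by
    rintro rfl
    have := hw.unique_p _ hc (edgeMon_ne_zero_iff.2 (.inr rfl)) ▸ hct
    simp [edgeMon_ne_zero_iff, htp] at this
  have hadj : T.Adj qa ya :=
    T.adj_iff_exists_edge.2 ⟨hyq.symm, tx.1, tx.1.2, bfGraph_adj_inl_inr.1 hqt, hya⟩
  have hgσ : edgeMon s(.inl qa, .inl ya) ∉ σ := by
    intro hg
    rcases hw.unique_q _ hg (edgeMon_ne_zero_iff.2 (.inl rfl)) with h | h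
    · simpa [edgeMon, hyp, hyq] using congrFun h (.inl ya)
    · simpa [edgeMon] using congrFun h (.inr tx)
  obtain ⟨m, hm, hmg, ρ, hgρ, -, huniq⟩ := hpot.exists_unique_cover_of_gap
    (fun _ => le_one_of_mem_edgeGens) hσ hb (edgeMon_mem_edgeGens (bfGraph_adj_inl_inl.2 hadj))
    hgσ (fun v hv => by
      rcases edgeMon_ne_zero_iff.1 hv with rfl | rfl
      exacts [⟨_, hw.mem, hw.e_q⟩, ⟨_, hc, edgeMon_ne_zero_iff.2 (.inr rfl)⟩])
    (hord.lt_of_ne_zero hadj (edgeMon_ne_zero_iff.2 (.inr rfl)))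
  rcases edgeMon_ne_zero_iff.1 hgρ with rfl | rfl
  · exact hw.ne ((huniq _ hw.mem hw.e_q).trans (huniq _ hb.1.1 hw.b_q).symm)
  · rw [← huniq _ hc (edgeMon_ne_zero_iff.2 (.inr rfl))] at hmg
    exact (hord.lt_of_ne_zero hadj hct).asymm hmg

lemma IsBFOrder.not_exchangeWitness_of_tip_joint (hord : IsBFOrder T w r ord)
    (hσ : σ ⊆ edgeGens (BFGraph T w)) (hpot : PotType2 (edgeGens (BFGraph T w)) ord σ)
    {p t : VT ⊕ (Σ e : T.edgeSet, Fin (w e))} {qx : Σ e : T.edgeSet, Fin (w e)}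
    (hpq : (BFGraph T w).Adj p (.inr qx)) (hqt : (BFGraph T w).Adj (.inr qx) t) (htp : t ≠ p)
    (hb : IsSBridge ord σ (edgeMon s(.inr qx, t))) :
    ¬ ExchangeWitness σ (edgeMon s(.inr qx, t)) b' (edgeMon s(p, .inr qx)) p (.inr qx) := by
  intro hw
  obtain ⟨pa, rfl, hpa⟩ := exists_eq_inl_of_bfGraph_adj_inr hpq
  obtain ⟨ta, rfl, hta⟩ := exists_eq_inl_of_bfGraph_adj_inr hqt.symm
  have hadj : T.Adj pa ta :=
    T.adj_iff_exists_edge.2 ⟨fun h => htp (h ▸ rfl), qx.1, qx.1.2, hpa, hta⟩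
  have hgσ : edgeMon s(.inl pa, .inl ta) ∉ σ := fun hg => by
    simpa [edgeMon] using
      congrFun (hw.unique_p _ hg (edgeMon_ne_zero_iff.2 (.inl rfl))) (.inr qx)
  have hbt : edgeMon s(Sum.inr qx, Sum.inl ta) (Sum.inl ta) ≠ 0 :=
    edgeMon_ne_zero_iff.2 (.inr rfl)
  obtain ⟨c, hc, hcb, hct⟩ := hb.1.exists_ne_of_ne_zero hbt
  obtain ⟨m, hm, hmg, ρ, hgρ, -, huniq⟩ := hpot.exists_unique_cover_of_gap
    (fun _ => le_one_of_mem_edgeGens) hσ hb (edgeMon_mem_edgeGens (bfGraph_adj_inl_inl.2 hadj))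
    hgσ (fun v hv => by
      rcases edgeMon_ne_zero_iff.1 hv with rfl | rfl
      exacts [⟨_, hw.mem, hw.e_p⟩, ⟨_, hb.1.1, hbt⟩])
    (hord.lt_of_ne_zero hadj (edgeMon_ne_zero_iff.2 (.inl rfl)))
  rcases edgeMon_ne_zero_iff.1 hgρ with rfl | rfl
  · rw [← huniq _ hw.mem hw.e_p] at hmg
    exact (hord.lt_of_ne_zero hadj hw.e_q).asymm hmg
  · exact hcb ((huniq _ hc hct).trans (huniq _ hb.1.1 hbt).symm)

lemma IsBFOrder.not_exchangeWitness (hT : T.IsTree) (hord : IsBFOrder T w r ord)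
    (hσ : σ ⊆ edgeGens (BFGraph T w)) (hpot : PotType2 (edgeGens (BFGraph T w)) ord σ)
    {b e : VT ⊕ (Σ e : T.edgeSet, Fin (w e)) → ℕ} {p q : VT ⊕ (Σ e : T.edgeSet, Fin (w e))}
    (hb : IsSBridge ord σ b) (hb'M : b' ∈ edgeGens (BFGraph T w)) (hlt : ord b' < ord b)
    (hlte : ord e < ord b') : ¬ ExchangeWitness σ b b' e p q := by
  intro hw
  have hpq : p ≠ q := fun h => hw.b'_p (h ▸ hw.b'_q)
  obtain ⟨hpq', rfl⟩ := eq_edgeMon_of_ne_zero (hσ hw.mem) hw.e_p hw.e_q hpq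
  obtain ⟨t, hqt, rfl⟩ := exists_eq_edgeMon_of_ne_zero (hσ hb.1.1) hw.b_q
  obtain ⟨s, hps, rfl⟩ := exists_eq_edgeMon_of_ne_zero hb'M hw.b'_p
  have hsq : s ≠ q := by
    rintro rfl
    exact edgeMon_ne_zero_iff.2 (.inr rfl) hw.b'_q
  have htp : t ≠ p := by
    rintro rfl
    exact hw.ne (hw.unique_p _ hb.1.1 (edgeMon_ne_zero_iff.2 (.inr rfl))).symm
  rcases q with qa | qx
  · rcases t with ta | tx
    · have hqt' : T.Adj qa ta := bfGraph_adj_inl_inl.1 hqt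
      have no_tip : ∀ x, edgeMon s(p, s) (.inr x) = 0 := fun x => by
        by_contra h
        exact (hord.lt_of_ne_zero hqt' h).asymm hlt
      obtain ⟨pa, rfl⟩ : ∃ pa, p = .inl pa := by
        rcases p with pa | px
        exacts [⟨pa, rfl⟩, absurd (no_tip px) (edgeMon_ne_zero_iff.2 (.inl rfl))]
      obtain ⟨sa, rfl⟩ : ∃ sa, s = .inl sa := by
        rcases s with sa | sx
        exacts [⟨sa, rfl⟩, absurd (no_tip sx) (edgeMon_ne_zero_iff.2 (.inr rfl))]
      exact hord.false_of_tree_path hT (bfGraph_adj_inl_inl.1 hps) (bfGraph_adj_inl_inl.1 hpq')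
        hqt' (fun h => hsq (h ▸ rfl)) (fun h => htp (h ▸ rfl)) hlte (hlte.trans hlt)
    · exact hord.not_exchangeWitness_of_tip_end hσ hpot hqt htp hb hw
  · exact hord.not_exchangeWitness_of_tip_joint hσ hpot hpq' hqt htp hb hw

end BFExchange

theorem BFGraph_bridgeFriendly_general {VT : Type} [Fintype VT] (T : SimpleGraph VT)
    (hT : T.IsTree) (w : T.edgeSet → ℕ) :
    BridgeFriendly (edgeGens (BFGraph T w)) := by
  obtain ⟨r⟩ := hT.connected.nonempty
  obtain ⟨ord, hinj, hord⟩ := (edgeGens (BFGraph T w)).exists_injOn_lt_of_lt (bfKey T w r)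
  exact ⟨ord, hinj, bridgeFriendlyWrt_of_forall_not_exchangeWitness
    (fun _ => le_one_of_mem_edgeGens) hinj fun _ hσ hpot _ _ _ _ _ hb hb'M hlt hlte =>
      IsBFOrder.not_exchangeWitness hT hord hσ hpot hb hb'M hlt hlte⟩

/-- **Proposition 4.9.** The edge ideal of `BF(T,w)` is bridge-friendly, for any finite
tree `T` with at least one edge and any edge-weight function `w : E(T) → ℕ`. -/
theorem BFGraph_bridgeFriendly {VT : Type} [Fintype VT] (T : SimpleGraph VT)
    (hT : T.IsTree) (hedge : T.edgeSet.Nonempty) (w : T.edgeSet → ℕ) :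
    BridgeFriendly (edgeGens (BFGraph T w)) :=
  BFGraph_bridgeFriendly_general T hT w

end ChauHaMaithani
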